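/- Let n ∈ ℕ, λ > 0, let M ∈ ℝ^{n×n} be a symmetric positive semidefinite matrix, let μ ∈ ℝⁿ, let z ∈ {0,1}ⁿ be a binary vector, and let Z = diag(z). Define β* = (λI + ZM)^{-1}Zμ. Then Zβ* = β* and Z(M + λI)Z β* = Zμ. -/

import Mathlib

/-!
Since `Z` is idempotent, applying `Z` to `(λI + ZM) x = Z w` gives
`λ Z x + Z M x = Z w`, and comparing the two equations yields `Z x = x`. For `w = 0`,
symmetry of `Z` then gives `xᵀ(λI + ZM)x = λ‖x‖² + xᵀMx`, which vanishes only for `x = 0` because `M ⪰ 0`; so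
`λI + ZM` is invertible and `β*` really solves `(λI + ZM) β* = Zμ`. Then `Z β* = β*`, and
`Z(M + λI)Z β* = Z M β* + λ β* = Zμ`.
-/

open Matrix

namespace Matrix

variable {ι : Type*} [Fintype ι] [DecidableEq ι]

theorem isIdempotentElem_diagonal {R : Type*} [Semiring R] {z : ι → R}
    (hz : ∀ i, IsIdempotentElem (z i)) : IsIdempotentElem (diagonal z) := by
  rw [IsIdempotentElem, diagonal_mul_diagonal]
  exact congrArg diagonal (funext hz)

theorem mulVec_eq_self_of_smul_one_add_mul_mulVec_eq {K : Type*} [Field K]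
    {P N : Matrix ι ι K} (hP : IsIdempotentElem P) {c : K} (hc : c ≠ 0) {x w : ι → K}
    (h : (c • 1 + P * N) *ᵥ x = P *ᵥ w) : P *ᵥ x = x := by
  have hPP : ∀ u, P *ᵥ (P *ᵥ u) = P *ᵥ u := fun u => by rw [mulVec_mulVec, hP.eq]
  rw [add_mulVec, smul_mulVec, one_mulVec, ← mulVec_mulVec] at h
  have hPh : c • (P *ᵥ x) + P *ᵥ (N *ᵥ x) = P *ᵥ w := by
    simpa only [mulVec_add, mulVec_smul, hPP] using congrArg (P *ᵥ ·) h
  exact smul_right_injective _ hc (add_right_cancel (hPh.trans h.symm))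

theorem isUnit_det_smul_one_add_mul {Z M : Matrix ι ι ℝ} (hZ : IsIdempotentElem Z)
    (hZs : Z.IsSymm) (hM : M.PosSemidef) {c : ℝ} (hc : 0 < c) :
    IsUnit (c • 1 + Z * M).det := by
  refine isUnit_iff_ne_zero.mpr fun hdet => ?_
  obtain ⟨x, hx0, hx⟩ := exists_mulVec_eq_zero_iff.mpr hdet
  have hZx : Z *ᵥ x = x :=
    mulVec_eq_self_of_smul_one_add_mul_mulVec_eq hZ hc.ne' (hx.trans (mulVec_zero Z).symm)
  have hxZ : x ᵥ* Z = x := by rw [← hZs.eq, vecMul_transpose, hZx]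
  have hquad : c * (x ⬝ᵥ x) + x ⬝ᵥ M *ᵥ x = 0 := by
    have h := congrArg (x ⬝ᵥ ·) hx
    rwa [add_mulVec, smul_mulVec, one_mulVec, ← mulVec_mulVec, dotProduct_add, dotProduct_smul,
      smul_eq_mul, dotProduct_mulVec x Z, hxZ, dotProduct_zero] at h
  have hMx : 0 ≤ x ⬝ᵥ M *ᵥ x := by simpa using hM.dotProduct_mulVec_nonneg x
  have hxx : 0 ≤ x ⬝ᵥ x := by simpa using dotProduct_self_star_nonneg x
  exact hx0 (dotProduct_self_eq_zero.mp (by nlinarith))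

end Matrix

theorem beta_star_normal_equations (n : ℕ) (lam : ℝ) (hlam : 0 < lam)
    (M : Matrix (Fin n) (Fin n) ℝ) (hM : M.PosSemidef) (μ : Fin n → ℝ)
    (z : Fin n → ℝ) (hz : ∀ i, z i = 0 ∨ z i = 1)
    (Z : Matrix (Fin n) (Fin n) ℝ) (hZ : Z = Matrix.diagonal z)
    (βstar : Fin n → ℝ)
    (hβ : βstar = (lam • (1 : Matrix (Fin n) (Fin n) ℝ) + Z * M)⁻¹ *ᵥ (Z *ᵥ μ)) :
    Z *ᵥ βstar = βstar ∧
    (Z * (M + lam • (1 : Matrix (Fin n) (Fin n) ℝ)) * Z) *ᵥ βstar = Z *ᵥ μ := by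
  have hZidem : IsIdempotentElem Z :=
    hZ ▸ isIdempotentElem_diagonal fun i => IsIdempotentElem.iff_eq_zero_or_one.mpr (hz i)
  have hA : (lam • 1 + Z * M) *ᵥ βstar = Z *ᵥ μ := by
    rw [hβ, mulVec_mulVec, mul_nonsing_inv _
      (isUnit_det_smul_one_add_mul hZidem (hZ ▸ isSymm_diagonal z) hM hlam), one_mulVec]
  have hZβ : Z *ᵥ βstar = βstar :=
    mulVec_eq_self_of_smul_one_add_mul_mulVec_eq hZidem hlam.ne' hA
  refine ⟨hZβ, ?_⟩
  rw [← mulVec_mulVec, hZβ, ← hA, Matrix.mul_add, Matrix.mul_smul, Matrix.mul_one, add_mulVec, add_mulVec,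
    smul_mulVec, smul_mulVec, one_mulVec, hZβ, add_comm]
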